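/- arXiv:1805.03836 — 5 statements merged into one kernel-verified Lean document; each statement's English description precedes it below -/
import Mathlib

section
/- Let a₁, α, b be real numbers with α ≠ 0. If x, y : ℝ → ℝ are differentiable functions satisfying for all t the modified Brusselator equations x'(t) = a₁ + x(t)²·y(t) − (α+b)·x(t) and y'(t) = b·x(t) − x(t)²·y(t), then the function z := x + y is twice differentiable and satisfies for all t: z''(t) = (b·a₁ + a₁³/α²) − (a₁²/α)·z(t) + (2a₁/α)·z(t)·z'(t) − (α + b + 3a₁²/α²)·z'(t) + (3a₁/α²)·z'(t)² − z'(t)³/α² − z(t)·z'(t)²/α. -/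
/-- For the modified Brusselator system, `z = x + y` is twice differentiable and
satisfies the reduced second-order equation. -/
theorem brusselator_reduction (a₁ α b : ℝ) (hα : α ≠ 0) (x y : ℝ → ℝ)
    (hx : Differentiable ℝ x) (hy : Differentiable ℝ y)
    (hxe : ∀ t, deriv x t = a₁ + (x t) ^ 2 * y t - (α + b) * x t)
    (hye : ∀ t, deriv y t = b * x t - (x t) ^ 2 * y t) :
    Differentiable ℝ (fun t => x t + y t) ∧
    Differentiable ℝ (deriv (fun t => x t + y t)) ∧
    ∀ t, deriv (deriv (fun t => x t + y t)) t =
      (b * a₁ + a₁ ^ 3 / α ^ 2) - (a₁ ^ 2 / α) * (x t + y t)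
      + (2 * a₁ / α) * (x t + y t) * deriv (fun t => x t + y t) t
      - (α + b + 3 * a₁ ^ 2 / α ^ 2) * deriv (fun t => x t + y t) t
      + (3 * a₁ / α ^ 2) * (deriv (fun t => x t + y t) t) ^ 2
      - (deriv (fun t => x t + y t) t) ^ 3 / α ^ 2
      - (x t + y t) * (deriv (fun t => x t + y t) t) ^ 2 / α := by
  have hz : Differentiable ℝ (fun t => x t + y t) := hx.add hy
  have hz' : deriv (fun t => x t + y t) = fun t => a₁ - α * x t := by
    funext t
    rw [deriv_fun_add (hx t) (hy t), hxe, hye]; ring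
  have hd : Differentiable ℝ (fun t => a₁ - α * x t) :=
    (differentiable_const _).sub (hx.const_mul α)
  refine ⟨hz, hz' ▸ hd, fun t => ?_⟩
  have h2 : deriv (deriv (fun t => x t + y t)) t = -α * deriv x t := by
    rw [hz', deriv_fun_sub (differentiable_const _ t) ((hx.const_mul α) t),
      deriv_const, deriv_const_mul _ (hx t)]; ring
  rw [h2, hxe, hz']
  field_simp
  ring
end

section
/- Let a₁, α, b be real numbers with a₁ ≠ 0, α ≠ 0, and set z_s = αb/a₁ + a₁/α. If a twice-differentiable function z : ℝ → ℝ satisfies the reduced Brusselator equation z'' = (b·a₁ + a₁³/α²) − (a₁²/α)·z + (2a₁/α)·z·z' − (α + b + 3a₁²/α²)·z' + (3a₁/α²)·z'² − z'³/α² − z·z'²/α, then ξ := z − z_s satisfies the Liénard equation ξ'' + F(ξ, ξ')·ξ' + (a₁²/α)·ξ = 0, where F(u, v) = −(2a₁/α)·u − b + a₁²/α² + α − (2a₁/α²)·v + (b/a₁)·v + v²/α² + u·v/α. -/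
/-- A solution `z` of the reduced Brusselator equation yields, via `ξ = z − z_s`
with `z_s = αb/a₁ + a₁/α`, a solution of the Liénard equation
`ξ'' + F(ξ, ξ')ξ' + (a₁²/α)ξ = 0`. -/
theorem brusselator_lienard (a₁ α b : ℝ) (ha₁ : a₁ ≠ 0) (hα : α ≠ 0)
    (z : ℝ → ℝ) (hz : Differentiable ℝ z) (hz' : Differentiable ℝ (deriv z))
    (heq : ∀ t, deriv (deriv z) t =
      (b * a₁ + a₁ ^ 3 / α ^ 2) - (a₁ ^ 2 / α) * z t
      + (2 * a₁ / α) * z t * deriv z t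
      - (α + b + 3 * a₁ ^ 2 / α ^ 2) * deriv z t
      + (3 * a₁ / α ^ 2) * (deriv z t) ^ 2
      - (deriv z t) ^ 3 / α ^ 2
      - z t * (deriv z t) ^ 2 / α) :
    let z_s := α * b / a₁ + a₁ / α
    let ξ : ℝ → ℝ := fun t => z t - z_s
    let F : ℝ → ℝ → ℝ := fun u v =>
      -(2 * a₁ / α) * u - b + a₁ ^ 2 / α ^ 2 + α - (2 * a₁ / α ^ 2) * v
      + (b / a₁) * v + v ^ 2 / α ^ 2 + u * v / α
    ∀ t, deriv (deriv ξ) t + F (ξ t) (deriv ξ t) * deriv ξ t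
      + (a₁ ^ 2 / α) * ξ t = 0 := by
  intro z_s ξ F t
  have hd1 : deriv ξ = deriv z := by
    funext s
    show deriv (fun t => z t - z_s) s = _
    rw [deriv_fun_sub (hz s) (differentiable_const _ s), deriv_const]
    ring
  have hd2 : deriv (deriv ξ) t = deriv (deriv z) t := by rw [hd1]
  rw [hd2, hd1, heq t]
  show _ + F (z t - z_s) (deriv z t) * deriv z t + (a₁ ^ 2 / α) * (z t - z_s) = 0
  simp only [F, z_s]
  field_simp
  ring
end

section
/- Let a₁, α, b, A, ω, t₀ be real numbers with ω ≠ 0, α ≠ 0, a₁ ≠ 0 and ω² = a₁²/α. Set c = 2a₁/α² − b/a₁, θ(t) = ω(t − t₀), ξ₀(t) = A·cos θ(t), and define ξ₁(t) = (A²c/2)·(1 + cos 2θ(t)/3 − (4/3)·cos θ(t)) + (A²a₁/(3ωα))·(sin 2θ(t) − 2·sin θ(t)). Then ξ₁ is twice differentiable and satisfies for all t: ξ₁''(t) + ω²·ξ₁(t) = (2a₁/α)·ξ₀(t)·ξ₀'(t) + c·ξ₀'(t)², together with the initial conditions ξ₁(t₀) = 0 and ξ₁'(t₀) = 0. -/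
/-- The first-order RG correction `ξ₁` for the modified Brusselator model at the
isochronicity boundary solves the forced harmonic oscillator
`ξ₁'' + ω²ξ₁ = (2a₁/α)ξ₀ξ₀' + cξ₀'²` with zero initial data at `t₀`. -/
theorem brusselator_first_order_correction (a₁ α b A ω t₀ : ℝ)
    (hω : ω ≠ 0) (hα : α ≠ 0) (ha₁ : a₁ ≠ 0) (hω2 : ω ^ 2 = a₁ ^ 2 / α) :
    let c := 2 * a₁ / α ^ 2 - b / a₁
    let θ : ℝ → ℝ := fun t => ω * (t - t₀)
    let ξ₀ : ℝ → ℝ := fun t => A * Real.cos (θ t)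
    let ξ₁ : ℝ → ℝ := fun t =>
      (A ^ 2 * c / 2) * (1 + Real.cos (2 * θ t) / 3 - (4 / 3) * Real.cos (θ t))
      + (A ^ 2 * a₁ / (3 * ω * α)) * (Real.sin (2 * θ t) - 2 * Real.sin (θ t))
    Differentiable ℝ ξ₁ ∧ Differentiable ℝ (deriv ξ₁) ∧
    (∀ t, deriv (deriv ξ₁) t + ω ^ 2 * ξ₁ t =
      (2 * a₁ / α) * ξ₀ t * deriv ξ₀ t + c * (deriv ξ₀ t) ^ 2) ∧
    ξ₁ t₀ = 0 ∧ deriv ξ₁ t₀ = 0 := by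
  intro c θ ξ₀ ξ₁
  have hθ : ∀ t, HasDerivAt θ ω t := fun t => by
    simpa using ((hasDerivAt_id t).sub_const t₀).const_mul ω
  have h2θ : ∀ t, HasDerivAt (fun t => 2 * θ t) (2 * ω) t := fun t => by
    simpa [mul_comm] using (hθ t).const_mul 2
  have hcos : ∀ t, HasDerivAt (fun t => Real.cos (θ t)) (-Real.sin (θ t) * ω) t :=
    fun t => (Real.hasDerivAt_cos _).comp t (hθ t)
  have hsin : ∀ t, HasDerivAt (fun t => Real.sin (θ t)) (Real.cos (θ t) * ω) t :=
    fun t => (Real.hasDerivAt_sin _).comp t (hθ t)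
  have hcos2 : ∀ t, HasDerivAt (fun t => Real.cos (2 * θ t)) (-Real.sin (2 * θ t) * (2 * ω)) t :=
    fun t => (Real.hasDerivAt_cos _).comp t (h2θ t)
  have hsin2 : ∀ t, HasDerivAt (fun t => Real.sin (2 * θ t)) (Real.cos (2 * θ t) * (2 * ω)) t :=
    fun t => (Real.hasDerivAt_sin _).comp t (h2θ t)
  set D1 : ℝ → ℝ := fun t =>
    (A ^ 2 * c / 2) * (-Real.sin (2 * θ t) * (2 * ω) / 3 - 4 / 3 * (-Real.sin (θ t) * ω))
    + A ^ 2 * a₁ / (3 * ω * α) * (Real.cos (2 * θ t) * (2 * ω) - 2 * (Real.cos (θ t) * ω))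
    with hD1def
  have hD1 : ∀ t, HasDerivAt ξ₁ (D1 t) t := fun t => by
    exact ((((((hcos2 t).div_const 3).const_add 1).sub ((hcos t).const_mul (4/3))).const_mul
      (A ^ 2 * c / 2)).add (((hsin2 t).sub ((hsin t).const_mul 2)).const_mul
      (A ^ 2 * a₁ / (3 * ω * α))))
  set D2 : ℝ → ℝ := fun t =>
    (A ^ 2 * c / 2) * (-(Real.cos (2 * θ t) * (2 * ω)) * (2 * ω) / 3
      - 4 / 3 * (-(Real.cos (θ t) * ω) * ω))
    + A ^ 2 * a₁ / (3 * ω * α) * (-Real.sin (2 * θ t) * (2 * ω) * (2 * ω)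
      - 2 * (-Real.sin (θ t) * ω * ω)) with hD2def
  have hD2 : ∀ t, HasDerivAt D1 (D2 t) t := fun t => by
    exact (((((hsin2 t).neg.mul_const (2 * ω)).div_const 3).sub
      (((hsin t).neg.mul_const ω).const_mul (4/3))).const_mul (A ^ 2 * c / 2)).add
      ((((hcos2 t).mul_const (2 * ω)).sub (((hcos t).mul_const ω).const_mul 2)).const_mul
      (A ^ 2 * a₁ / (3 * ω * α)))
  have hd1 : deriv ξ₁ = D1 := funext fun t => (hD1 t).deriv
  have hd2 : deriv (deriv ξ₁) = D2 := by rw [hd1]; exact funext fun t => (hD2 t).deriv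
  have hξ₀d : ∀ t, deriv ξ₀ t = A * (-Real.sin (θ t) * ω) := fun t =>
    ((hcos t).const_mul A).deriv
  refine ⟨fun t => (hD1 t).differentiableAt, ?_, ?_, ?_, ?_⟩
  · rw [hd1]; exact fun t => (hD2 t).differentiableAt
  · intro t
    rw [hd2, hξ₀d]
    show D2 t + ω ^ 2 * ((A ^ 2 * c / 2) * (1 + Real.cos (2 * θ t) / 3 - (4 / 3) * Real.cos (θ t))
      + (A ^ 2 * a₁ / (3 * ω * α)) * (Real.sin (2 * θ t) - 2 * Real.sin (θ t))) = _
    rw [hD2def]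
    simp only
    rw [Real.sin_two_mul, Real.cos_two_mul]
    have hs : Real.sin (θ t) ^ 2 = 1 - Real.cos (θ t) ^ 2 := Real.sin_sq (θ t)
    rw [show (A * (-Real.sin (θ t) * ω)) ^ 2 = A ^ 2 * ω ^ 2 * (1 - Real.cos (θ t) ^ 2) from by
      linear_combination (A ^ 2 * ω ^ 2) * hs]
    show _ = (2 * a₁ / α) * (A * Real.cos (θ t)) * (A * (-Real.sin (θ t) * ω)) + _
    field_simp
    ring
  · show (A ^ 2 * c / 2) * (1 + Real.cos (2 * θ t₀) / 3 - (4 / 3) * Real.cos (θ t₀))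
      + (A ^ 2 * a₁ / (3 * ω * α)) * (Real.sin (2 * θ t₀) - 2 * Real.sin (θ t₀)) = 0
    simp only [θ, sub_self, mul_zero, Real.cos_zero, Real.sin_zero]
    ring
  · rw [hd1, hD1def]
    simp only [θ, sub_self, mul_zero, Real.cos_zero, Real.sin_zero]
    ring
end

section
/- Let a, b be real numbers. If x, y : ℝ → ℝ are differentiable functions satisfying for all t the glycolytic oscillator equations x'(t) = −x(t) + (a + x(t)²)·y(t) and y'(t) = b − (a + x(t)²)·y(t), then z := x + y is twice differentiable and satisfies for all t: z''(t) = −(1 + a + 3b²)·z'(t) − (a + b²)·z(t) + (b + ab + b³) + 2b·z(t)·z'(t) + 3b·z'(t)² − z(t)·z'(t)² − z'(t)³. -/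
/-- For the glycolytic oscillator, `z = x + y` is twice differentiable and satisfies
the reduced second-order equation. -/
theorem glycolytic_reduction (a b : ℝ) (x y : ℝ → ℝ)
    (hx : Differentiable ℝ x) (hy : Differentiable ℝ y)
    (hxe : ∀ t, deriv x t = -x t + (a + (x t) ^ 2) * y t)
    (hye : ∀ t, deriv y t = b - (a + (x t) ^ 2) * y t) :
    Differentiable ℝ (fun t => x t + y t) ∧
    Differentiable ℝ (deriv (fun t => x t + y t)) ∧
    ∀ t, deriv (deriv (fun t => x t + y t)) t =
      -(1 + a + 3 * b ^ 2) * deriv (fun t => x t + y t) t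
      - (a + b ^ 2) * (x t + y t)
      + (b + a * b + b ^ 3)
      + 2 * b * (x t + y t) * deriv (fun t => x t + y t) t
      + 3 * b * (deriv (fun t => x t + y t) t) ^ 2
      - (x t + y t) * (deriv (fun t => x t + y t) t) ^ 2
      - (deriv (fun t => x t + y t) t) ^ 3 := by
  have hz : Differentiable ℝ (fun t => x t + y t) := hx.add hy
  have hz' : deriv (fun t => x t + y t) = fun t => b - x t := by
    funext t
    rw [deriv_fun_add (hx t) (hy t), hxe, hye]; ring
  refine ⟨hz, ?_, ?_⟩
  · rw [hz']
    exact (differentiable_const b).sub hx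
  · intro t
    rw [hz', deriv_const_sub, hxe]
    ring
end

section
/- Let a, b, A, ω, t₀ be real numbers with ω ≠ 0, a + b² ≠ 0 and ω² = a + b². Set k = b + b/(a + b²), θ(t) = ω(t − t₀), ξ₀(t) = A·cos θ(t), and define ξ₁(t) = −(2bA²/(3ω))·sin θ(t) − (2(3b − k)A²/3)·cos θ(t) + ((3b − k)A²/2)·(1 + cos 2θ(t)/3) + (bA²/(3ω))·sin 2θ(t). Then ξ₁ is twice differentiable and satisfies for all t: ξ₁''(t) + ω²·ξ₁(t) = 2b·ξ₀(t)·ξ₀'(t) + (3b − k)·ξ₀'(t)², together with the initial conditions ξ₁(t₀) = 0 and ξ₁'(t₀) = 0. -/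
private noncomputable def F (c₁ c₂ c₃ c₄ c₅ ω t₀ : ℝ) : ℝ → ℝ := fun t =>
  c₁ * Real.sin (ω * (t - t₀)) + c₂ * Real.cos (ω * (t - t₀))
  + c₃ * Real.cos (2 * (ω * (t - t₀))) + c₄ * Real.sin (2 * (ω * (t - t₀))) + c₅

private lemma F_hasDerivAt (c₁ c₂ c₃ c₄ c₅ ω t₀ t : ℝ) :
    HasDerivAt (F c₁ c₂ c₃ c₄ c₅ ω t₀)
      (F (-(c₂ * ω)) (c₁ * ω) (c₄ * (2 * ω)) (-(c₃ * (2 * ω))) 0 ω t₀ t) t := by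
  have h : HasDerivAt (fun t : ℝ => ω * (t - t₀)) ω t := by
    simpa using (((hasDerivAt_id t).sub_const t₀).const_mul ω)
  have h2 : HasDerivAt (fun t : ℝ => 2 * (ω * (t - t₀))) (2 * ω) t := by
    simpa [mul_comm] using h.const_mul 2
  have hs := ((Real.hasDerivAt_sin (ω * (t - t₀))).comp t h).const_mul c₁
  have hc := ((Real.hasDerivAt_cos (ω * (t - t₀))).comp t h).const_mul c₂
  have hc2 := ((Real.hasDerivAt_cos (2 * (ω * (t - t₀)))).comp t h2).const_mul c₃
  have hs2 := ((Real.hasDerivAt_sin (2 * (ω * (t - t₀)))).comp t h2).const_mul c₄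
  have := ((((hs.add hc).add hc2).add hs2).add_const c₅)
  refine this.congr_deriv ?_
  simp [F]; ring

private lemma F_deriv (c₁ c₂ c₃ c₄ c₅ ω t₀ : ℝ) :
    deriv (F c₁ c₂ c₃ c₄ c₅ ω t₀) = F (-(c₂ * ω)) (c₁ * ω) (c₄ * (2 * ω)) (-(c₃ * (2 * ω))) 0 ω t₀ :=
  funext fun t => (F_hasDerivAt c₁ c₂ c₃ c₄ c₅ ω t₀ t).deriv

private lemma F_diff (c₁ c₂ c₃ c₄ c₅ ω t₀ : ℝ) : Differentiable ℝ (F c₁ c₂ c₃ c₄ c₅ ω t₀) :=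
  fun t => (F_hasDerivAt c₁ c₂ c₃ c₄ c₅ ω t₀ t).differentiableAt

/-- The first-order RG correction `ξ₁` for the glycolytic oscillator at the
isochronicity boundary solves the forced harmonic oscillator
`ξ₁'' + ω²ξ₁ = 2bξ₀ξ₀' + (3b − k)ξ₀'²` with zero initial data at `t₀`. -/
theorem glycolytic_first_order_correction (a b A ω t₀ : ℝ)
    (hω : ω ≠ 0) (hab : a + b ^ 2 ≠ 0) (hω2 : ω ^ 2 = a + b ^ 2) :
    let k := b + b / (a + b ^ 2)
    let θ : ℝ → ℝ := fun t => ω * (t - t₀)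
    let ξ₀ : ℝ → ℝ := fun t => A * Real.cos (θ t)
    let ξ₁ : ℝ → ℝ := fun t =>
      -(2 * b * A ^ 2 / (3 * ω)) * Real.sin (θ t)
      - (2 * (3 * b - k) * A ^ 2 / 3) * Real.cos (θ t)
      + ((3 * b - k) * A ^ 2 / 2) * (1 + Real.cos (2 * θ t) / 3)
      + (b * A ^ 2 / (3 * ω)) * Real.sin (2 * θ t)
    Differentiable ℝ ξ₁ ∧ Differentiable ℝ (deriv ξ₁) ∧
    (∀ t, deriv (deriv ξ₁) t + ω ^ 2 * ξ₁ t =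
      2 * b * ξ₀ t * deriv ξ₀ t + (3 * b - k) * (deriv ξ₀ t) ^ 2) ∧
    ξ₁ t₀ = 0 ∧ deriv ξ₁ t₀ = 0 := by
  intro k θ ξ₀ ξ₁
  set c₁ := -(2 * b * A ^ 2 / (3 * ω)) with hc₁
  set c₂ := -(2 * (3 * b - k) * A ^ 2 / 3) with hc₂
  set c₃ := (3 * b - k) * A ^ 2 / 6 with hc₃
  set c₄ := b * A ^ 2 / (3 * ω) with hc₄
  set c₅ := (3 * b - k) * A ^ 2 / 2 with hc₅
  have hξ₁ : ξ₁ = F c₁ c₂ c₃ c₄ c₅ ω t₀ := by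
    funext t; simp only [ξ₁, θ, F, hc₁, hc₂, hc₃, hc₄, hc₅]; ring
  have hξ₀ : ξ₀ = F 0 A 0 0 0 ω t₀ := by
    funext t; simp [ξ₀, θ, F]
  have hd1 : deriv ξ₁ = F (-(c₂ * ω)) (c₁ * ω) (c₄ * (2 * ω)) (-(c₃ * (2 * ω))) 0 ω t₀ := by
    rw [hξ₁, F_deriv]
  have hd2 : deriv (deriv ξ₁) =
      F (-(c₁ * ω * ω)) (-(c₂ * ω) * ω) (-(c₃ * (2 * ω)) * (2 * ω)) (-(c₄ * (2 * ω) * (2 * ω))) 0 ω t₀ := by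
    rw [hd1, F_deriv]
  have hd0 : deriv ξ₀ = F (-(A * ω)) 0 0 0 0 ω t₀ := by
    rw [hξ₀, F_deriv]; simp [F]
  refine ⟨hξ₁ ▸ F_diff _ _ _ _ _ _ _, hd1 ▸ F_diff _ _ _ _ _ _ _, ?_, ?_, ?_⟩
  · intro t
    rw [hd2, hξ₁, hd0, hξ₀]
    simp only [F]
    have hpy := Real.sin_sq_add_cos_sq (ω * (t - t₀))
    rw [Real.cos_two_mul, Real.sin_two_mul]
    set s := Real.sin (ω * (t - t₀))
    set c := Real.cos (ω * (t - t₀))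
    have g1 : c₁ * ω = -(2 * b * A ^ 2 / 3) := by rw [hc₁]; field_simp
    have g4 : c₄ * (2 * ω) = 2 * (b * A ^ 2) / 3 := by rw [hc₄]; field_simp
    rw [g1, g4, hc₂, hc₃, hc₅, hc₁, hc₄]
    field_simp
    linear_combination (36 / (a + b ^ 2) - 72) * b * A ^ 2 * ω ^ 2 * hpy
  · rw [hξ₁]; simp [F, hc₂, hc₅]; ring
  · rw [hd1]; simp [F, hc₁, hc₄]; field_simp; ring
end
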